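/- arXiv:1805.04395 — 2 statements merged into one kernel-verified Lean document; each statement's English description precedes it below -/
import Mathlib

section
/- Let α : ℝ → ℝ be admissible. Then there exists a map F : ℝ² → ℝ² such that F(1 − r·cos θ, r·sin θ) = (1 − r·cos(α(θ)), r·sin(α(θ))) for all r ≥ 0 and θ ∈ [0, π/2], and: (i) F restricts to a bijection from the closed sector S := {(x, y) : x ≤ 1, y ≥ 0} onto the closed upper half-plane {(x, y) : y ≥ 0}, continuous with continuous inverse; (ii) F is C^∞ on S ∖ {(1, 0)} and the inverse is C^∞ on {(x, y) : y ≥ 0} ∖ {(1, 0)} (in the sense of ContDiffOn); (iii) F(p) = p for every p = (x, y) ∈ S with y ≤ tan(π/6)·(1 − x); (iv) F(x, y) = (1 + y, 1 − x) for every (x, y) ∈ S with y ≥ tan(π/3)·(1 − x). -/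
open Real Set

/-- A `C^∞` function `α : ℝ → ℝ` is *admissible* if its derivative is strictly
positive on `[0, π/2]`, `α t = t` on `[0, π/6]`, and `α t = t + π/2` on
`[π/3, π/2]`. -/
def Admissible (α : ℝ → ℝ) : Prop :=
  ContDiff ℝ (⊤ : ℕ∞) α ∧
    (∀ t ∈ Icc 0 (π / 2), 0 < deriv α t) ∧
    (∀ t ∈ Icc 0 (π / 6), α t = t) ∧
    (∀ t ∈ Icc (π / 3) (π / 2), α t = t + π / 2)

/-- The closed sector `{(x, y) | x ≤ 1, 0 ≤ y}` based at `(1, 0)`. -/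
def sector : Set (ℝ × ℝ) := {p : ℝ × ℝ | p.1 ≤ 1 ∧ 0 ≤ p.2}

/-- The closed upper half-plane `{(x, y) | 0 ≤ y}`. -/
def upperHalfPlane : Set (ℝ × ℝ) := {p : ℝ × ℝ | 0 ≤ p.2}

/-!
In the complex coordinate `z = (1 - x) + y i` centred at the corner, the sector is the closed
first quadrant and the half-plane is `{0 ≤ Im z}`. The model is `z ↦ |z| e^{i β(arg z)}`, where `β`
extends `α` to an increasing diffeomorphism of `ℝ` (the identity below `0`, the shift by `π/2`
above `π/2`); its inverse is the same construction for `β⁻¹`. It preserves `|z|`, hence is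
continuous at the corner, and away from the corner it is smooth because `arg` is smooth off the
negative real axis.
-/

open Filter Topology
open Complex (I arg slitPlane)

namespace CornerStraightening

variable {α f g : ℝ → ℝ} {z : ℂ} {p : ℝ × ℝ}

noncomputable def angleExt (α : ℝ → ℝ) (t : ℝ) : ℝ :=
  if t ≤ 0 then t else if π / 2 ≤ t then t + π / 2 else α t

theorem angleExt_of_le (hα : Admissible α) {t : ℝ} (ht : t ≤ π / 6) : angleExt α t = t := by
  unfold angleExt
  split_ifs with h0 h1
  · rfl
  · linarith [pi_pos]
  · exact hα.2.2.1 t ⟨by linarith, ht⟩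

theorem angleExt_of_mem_Icc (hα : Admissible α) {t : ℝ} (ht : t ∈ Icc 0 (π / 2)) :
    angleExt α t = α t := by
  unfold angleExt
  split_ifs with h0 h1
  · rw [le_antisymm h0 ht.1, hα.2.2.1 0 ⟨le_rfl, by positivity⟩]
  · rw [le_antisymm ht.2 h1, hα.2.2.2 _ ⟨by linarith [pi_pos], le_rfl⟩]
  · rfl

theorem angleExt_of_ge (hα : Admissible α) {t : ℝ} (ht : π / 3 ≤ t) :
    angleExt α t = t + π / 2 := by
  unfold angleExt
  split_ifs with h0 h1
  · linarith [pi_pos]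
  · rfl
  · exact hα.2.2.2 t ⟨ht, (not_le.mp h1).le⟩

theorem angleExt_eventuallyEq (hα : Admissible α) (t : ℝ) :
    angleExt α =ᶠ[𝓝 t] id ∨ (t ∈ Icc 0 (π / 2) ∧ angleExt α =ᶠ[𝓝 t] α) ∨
      angleExt α =ᶠ[𝓝 t] (· + π / 2) := by
  rcases lt_or_ge t (π / 6) with h₁ | h₁
  · exact .inl <| eventually_of_mem (Iio_mem_nhds h₁) fun s hs => angleExt_of_le hα hs.le
  rcases lt_or_ge t (π / 2) with h₂ | h₂
  · have h₀ : 0 < t := by linarith [pi_pos]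
    exact .inr <| .inl ⟨⟨h₀.le, h₂.le⟩, eventually_of_mem (Ioo_mem_nhds h₀ h₂)
      fun s hs => angleExt_of_mem_Icc hα ⟨hs.1.le, hs.2.le⟩⟩
  · have h₃ : π / 3 < t := by linarith [pi_pos]
    exact .inr <| .inr <| eventually_of_mem (Ioi_mem_nhds h₃) fun s hs => angleExt_of_ge hα hs.le

theorem contDiff_angleExt (hα : Admissible α) : ContDiff ℝ (⊤ : ℕ∞) (angleExt α) :=
  contDiff_iff_contDiffAt.2 fun t => by
    rcases angleExt_eventuallyEq hα t with h | ⟨-, h⟩ | h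
    · exact contDiffAt_id.congr_of_eventuallyEq h
    · exact hα.1.contDiffAt.congr_of_eventuallyEq h
    · exact (contDiffAt_id.add contDiffAt_const).congr_of_eventuallyEq h

theorem deriv_angleExt_pos (hα : Admissible α) (t : ℝ) : 0 < deriv (angleExt α) t := by
  rcases angleExt_eventuallyEq hα t with h | ⟨ht, h⟩ | h
  · simp [h.deriv_eq]
  · exact h.deriv_eq ▸ hα.2.1 t ht
  · simp [h.deriv_eq]

theorem surjective_angleExt (hα : Admissible α) : Function.Surjective (angleExt α) := by
  refine (contDiff_angleExt hα).continuous.surjective ?_ ?_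
  · refine (tendsto_atTop_add_const_right _ (π / 2) tendsto_id).congr' ?_
    exact eventually_of_mem (Ioi_mem_atTop (π / 3)) fun t ht => (angleExt_of_ge hα ht.le).symm
  · refine tendsto_id.congr' ?_
    exact eventually_of_mem (Iio_mem_atBot (π / 6)) fun t ht => (angleExt_of_le hα ht.le).symm

noncomputable def angleExtIso (hα : Admissible α) : ℝ ≃o ℝ :=
  StrictMono.orderIsoOfSurjective (angleExt α) (strictMono_of_deriv_pos (deriv_angleExt_pos hα))
    (surjective_angleExt hα)

@[simp]
theorem coe_angleExtIso (hα : Admissible α) : ⇑(angleExtIso hα) = angleExt α := rfl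

theorem contDiff_angleExtIso_symm (hα : Admissible α) :
    ContDiff ℝ (⊤ : ℕ∞) (angleExtIso hα).symm :=
  (angleExtIso hα).toHomeomorph.contDiff_symm_deriv (fun t => (deriv_angleExt_pos hα t).ne')
    (fun t => ((contDiff_angleExt hα).differentiable (by simp) t).hasDerivAt)
    (contDiff_angleExt hα)

noncomputable def polarRescale (f : ℝ → ℝ) (z : ℂ) : ℂ :=
  ‖z‖ * Complex.exp (f (arg z) * I)

@[simp]
theorem polarRescale_zero (f : ℝ → ℝ) : polarRescale f 0 = 0 := by simp [polarRescale]

@[simp]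
theorem norm_polarRescale (f : ℝ → ℝ) (z : ℂ) : ‖polarRescale f z‖ = ‖z‖ := by
  simp [polarRescale, Complex.norm_exp_ofReal_mul_I]

theorem polarRescale_re (f : ℝ → ℝ) (z : ℂ) :
    (polarRescale f z).re = ‖z‖ * cos (f (arg z)) := by
  simp [polarRescale, Complex.exp_ofReal_mul_I_re]

theorem polarRescale_im (f : ℝ → ℝ) (z : ℂ) :
    (polarRescale f z).im = ‖z‖ * sin (f (arg z)) := by
  simp [polarRescale, Complex.exp_ofReal_mul_I_im]

theorem polarRescale_ofReal_mul_exp (f : ℝ → ℝ) {r θ : ℝ} (hr : 0 ≤ r) (hθ : θ ∈ Ioc (-π) π) :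
    polarRescale f (r * Complex.exp (θ * I)) = r * Complex.exp (f θ * I) := by
  rcases hr.eq_or_lt with rfl | hr
  · simp
  have harg : arg (r * Complex.exp (θ * I)) = θ := by
    rw [Complex.arg_real_mul _ hr, Complex.exp_mul_I, Complex.arg_cos_add_sin_mul_I hθ]
  simp [polarRescale, harg, Complex.norm_exp_ofReal_mul_I, abs_of_pos hr]

theorem polarRescale_of_eq_add {c : ℝ} (h : f (arg z) = arg z + c) :
    polarRescale f z = Complex.exp (c * I) * z := by
  conv_rhs => rw [← Complex.norm_mul_exp_arg_mul_I z]
  rw [polarRescale, h, mul_left_comm, ← Complex.exp_add]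
  push_cast
  ring_nf

theorem polarRescale_polarRescale (hf : f (arg z) ∈ Ioc (-π) π) (hgf : g (f (arg z)) = arg z) :
    polarRescale g (polarRescale f z) = z := by
  rw [polarRescale.eq_1 f, polarRescale_ofReal_mul_exp g (norm_nonneg z) hf, hgf,
    Complex.norm_mul_exp_arg_mul_I]

theorem polarRescale_exp_mul {c : ℝ} (h : arg z + c ∈ Ioc (-π) π) :
    polarRescale f (Complex.exp (c * I) * z) = polarRescale (fun θ => f (θ + c)) z := by
  conv_lhs => rw [← Complex.norm_mul_exp_arg_mul_I z]
  rw [mul_left_comm, ← Complex.exp_add, ← add_mul, add_comm (c : ℂ), ← Complex.ofReal_add,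
    polarRescale_ofReal_mul_exp f (norm_nonneg z) h, polarRescale]

theorem continuousAt_polarRescale_zero (f : ℝ → ℝ) : ContinuousAt (polarRescale f) 0 := by
  rw [ContinuousAt, polarRescale_zero, tendsto_zero_iff_norm_tendsto_zero]
  simpa using (continuous_norm.tendsto (0 : ℂ))

theorem contDiffAt_polarRescale {n : WithTop ℕ∞} (hf : ContDiffAt ℝ n f (arg z))
    (hz : z ∈ slitPlane) : ContDiffAt ℝ n (polarRescale f) z := by
  have harg : ContDiffAt ℝ n arg z :=
    (Complex.imCLM.contDiff.contDiffAt.comp z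
      ((Complex.contDiffAt_log hz).restrict_scalars ℝ)).congr_of_eventuallyEq
      (.of_forall fun w => (Complex.log_im w).symm)
  have hnorm : ContDiffAt ℝ n (fun w : ℂ => ‖w‖) z :=
    contDiffAt_norm ℂ (Complex.slitPlane_ne_zero hz)
  have hofReal : ContDiff ℝ n ((↑) : ℝ → ℂ) := Complex.ofRealCLM.contDiff
  have hexp : ContDiff ℝ n Complex.exp := (Complex.contDiff_exp (𝕜 := ℂ)).restrict_scalars ℝ
  unfold polarRescale
  fun_prop

theorem arg_neg_I_mul_mem_Icc {w : ℂ} (hw : 0 ≤ w.im) : arg (-I * w) ∈ Icc (-(π / 2)) (π / 2) :=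
  ⟨Complex.neg_pi_div_two_le_arg_iff.2 (.inl (by simpa using hw)),
    Complex.arg_le_pi_div_two_iff.2 (.inl (by simpa using hw))⟩

theorem arg_le_of_im_le_tan_mul_re {θ : ℝ} (hθ : θ ∈ Ico 0 (π / 2)) (hre : 0 ≤ z.re)
    (h : z.im ≤ tan θ * z.re) : arg z ≤ θ := by
  rcases hre.eq_or_lt with hre | hre
  · rw [← hre, mul_zero] at h
    rcases h.lt_or_eq with him | him
    · exact (Complex.arg_neg_iff.2 him).le.trans hθ.1
    · rw [show z = 0 from Complex.ext hre.symm him, Complex.arg_zero]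
      exact hθ.1
  have harg := abs_lt.1 (Complex.abs_arg_lt_pi_div_two_iff.2 (.inl hre))
  refine (strictMonoOn_tan.le_iff_le ⟨harg.1, harg.2⟩ ⟨by linarith [hθ.1], hθ.2⟩).1 ?_
  rwa [Complex.tan_arg, div_le_iff₀ hre]

theorem le_arg_of_tan_mul_re_le_im {θ : ℝ} (hθ : θ ∈ Ioo 0 (π / 2)) (hz : z ≠ 0)
    (hre : 0 ≤ z.re) (h : tan θ * z.re ≤ z.im) : θ ≤ arg z := by
  rcases hre.eq_or_lt with hre | hre
  · rw [← hre, mul_zero] at h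
    have him : 0 < z.im := h.lt_of_ne fun him => hz (Complex.ext hre.symm him.symm)
    rw [Complex.arg_eq_pi_div_two_iff.2 ⟨hre.symm, him⟩]
    exact hθ.2.le
  have harg := abs_lt.1 (Complex.abs_arg_lt_pi_div_two_iff.2 (.inl hre))
  refine (strictMonoOn_tan.le_iff_le ⟨by linarith [hθ.1], hθ.2⟩ ⟨harg.1, harg.2⟩).1 ?_
  rwa [Complex.tan_arg, le_div_iff₀ hre]

def toCorner (p : ℝ × ℝ) : ℂ := ⟨1 - p.1, p.2⟩

def ofCorner (z : ℂ) : ℝ × ℝ := (1 - z.re, z.im)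

@[simp] theorem toCorner_re (p : ℝ × ℝ) : (toCorner p).re = 1 - p.1 := rfl

@[simp] theorem toCorner_im (p : ℝ × ℝ) : (toCorner p).im = p.2 := rfl

@[simp] theorem ofCorner_toCorner (p : ℝ × ℝ) : ofCorner (toCorner p) = p := by
  simp [ofCorner]

@[simp] theorem toCorner_ofCorner (z : ℂ) : toCorner (ofCorner z) = z := by
  apply Complex.ext <;> simp [ofCorner]

@[simp] theorem toCorner_eq_zero : toCorner p = 0 ↔ p = (1, 0) := by
  simp only [Complex.ext_iff, Prod.ext_iff, toCorner_re, toCorner_im, Complex.zero_re,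
    Complex.zero_im]
  constructor <;> rintro ⟨h₁, h₂⟩ <;> exact ⟨by linarith, h₂⟩

@[simp] theorem toCorner_one_zero : toCorner (1, 0) = 0 := toCorner_eq_zero.2 rfl

theorem contDiff_toCorner {n : WithTop ℕ∞} : ContDiff ℝ n toCorner :=
  Complex.equivRealProdCLM.symm.contDiff.comp
    ((contDiff_const.sub contDiff_fst).prodMk contDiff_snd)

theorem contDiff_ofCorner {n : WithTop ℕ∞} : ContDiff ℝ n ofCorner :=
  (contDiff_const.sub Complex.reCLM.contDiff).prodMk Complex.imCLM.contDiff

noncomputable def straighten (f : ℝ → ℝ) (p : ℝ × ℝ) : ℝ × ℝ :=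
  ofCorner (polarRescale f (toCorner p))

theorem straighten_polar (f : ℝ → ℝ) {r θ : ℝ} (hr : 0 ≤ r) (hθ : θ ∈ Ioc (-π) π) :
    straighten f (1 - r * cos θ, r * sin θ) = (1 - r * cos (f θ), r * sin (f θ)) := by
  have h : toCorner (1 - r * cos θ, r * sin θ) = r * Complex.exp (θ * I) := by
    apply Complex.ext <;> simp [Complex.exp_ofReal_mul_I_re, Complex.exp_ofReal_mul_I_im]
  simp [straighten, h, polarRescale_ofReal_mul_exp f hr hθ, ofCorner,
    Complex.exp_ofReal_mul_I_re, Complex.exp_ofReal_mul_I_im]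

theorem straighten_straighten (hf : f (arg (toCorner p)) ∈ Ioc (-π) π)
    (hgf : g (f (arg (toCorner p))) = arg (toCorner p)) : straighten g (straighten f p) = p := by
  rw [straighten, straighten, toCorner_ofCorner, polarRescale_polarRescale hf hgf,
    ofCorner_toCorner]

theorem straighten_of_eq_add {c : ℝ} (h : f (arg (toCorner p)) = arg (toCorner p) + c) :
    straighten f p = ofCorner (Complex.exp (c * I) * toCorner p) := by
  rw [straighten, polarRescale_of_eq_add h]

theorem sector_subset_upperHalfPlane : sector ⊆ upperHalfPlane := fun _ hp => hp.2

theorem arg_toCorner_mem_of_mem_sector (hp : p ∈ sector) : arg (toCorner p) ∈ Icc 0 (π / 2) :=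
  ⟨Complex.arg_nonneg_iff.2 hp.2, Complex.arg_le_pi_div_two_iff.2 (.inl (by simpa using hp.1))⟩

theorem arg_toCorner_mem_of_mem_upperHalfPlane (hp : p ∈ upperHalfPlane) :
    arg (toCorner p) ∈ Icc 0 π :=
  ⟨Complex.arg_nonneg_iff.2 hp, Complex.arg_le_pi _⟩

theorem mapsTo_straighten_sector (hf : MapsTo f (Icc 0 (π / 2)) (Icc 0 π)) :
    MapsTo (straighten f) sector upperHalfPlane := fun p hp => by
  have h := hf (arg_toCorner_mem_of_mem_sector hp)
  show 0 ≤ (polarRescale f (toCorner p)).im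
  rw [polarRescale_im]
  exact mul_nonneg (norm_nonneg _) (sin_nonneg_of_nonneg_of_le_pi h.1 h.2)

theorem mapsTo_straighten_upperHalfPlane (hf : MapsTo f (Icc 0 π) (Icc 0 (π / 2))) :
    MapsTo (straighten f) upperHalfPlane sector := fun p hp => by
  have h := hf (arg_toCorner_mem_of_mem_upperHalfPlane hp)
  refine ⟨?_, ?_⟩
  · show 1 - (polarRescale f (toCorner p)).re ≤ 1
    rw [polarRescale_re, sub_le_self_iff]
    exact mul_nonneg (norm_nonneg _) (cos_nonneg_of_mem_Icc ⟨by linarith [h.1, pi_pos], h.2⟩)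
  · show 0 ≤ (polarRescale f (toCorner p)).im
    rw [polarRescale_im]
    exact mul_nonneg (norm_nonneg _)
      (sin_nonneg_of_nonneg_of_le_pi h.1 (by linarith [h.2, pi_pos]))

theorem contDiffWithinAt_straighten {n : WithTop ℕ∞} (hf : ContDiff ℝ n f)
    (hp : p ∈ upperHalfPlane) (hp₀ : p ≠ (1, 0)) :
    ContDiffWithinAt ℝ n (straighten f) upperHalfPlane p := by
  -- rotating by `-π/2` moves the branch cut of `arg` out of the closed upper half-plane
  have hrot : ∀ q ∈ upperHalfPlane, straighten f q =
      ofCorner (polarRescale (fun θ => f (θ + π / 2)) (-I * toCorner q)) := fun q hq => by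
    have h := arg_neg_I_mul_mem_Icc (w := toCorner q) hq
    rw [straighten, ← polarRescale_exp_mul ⟨by linarith [h.1, pi_pos], by linarith [h.2]⟩]
    congr 2
    rw [Complex.ofReal_div, Complex.ofReal_ofNat, Complex.exp_pi_div_two_mul_I, ← mul_assoc,
      mul_neg, Complex.I_mul_I, neg_neg, one_mul]
  have hslit : -I * toCorner p ∈ slitPlane := by
    refine Complex.mem_slitPlane_iff_arg.2 ⟨?_, by simpa using hp₀⟩
    have := (arg_neg_I_mul_mem_Icc (w := toCorner p) hp).2
    linarith [pi_pos]
  refine ContDiffWithinAt.congr ?_ hrot (hrot p hp)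
  exact (contDiff_ofCorner.contDiffAt.comp p ((contDiffAt_polarRescale
    (hf.comp (contDiff_id.add contDiff_const)).contDiffAt hslit).comp p
    (contDiff_const.mul contDiff_toCorner).contDiffAt)).contDiffWithinAt

theorem continuousOn_straighten (hf : Continuous f) :
    ContinuousOn (straighten f) upperHalfPlane := fun p hp => by
  rcases eq_or_ne p (1, 0) with rfl | hp₀
  · have hcorner : ContinuousAt (polarRescale f) (toCorner (1, 0)) := by
      simpa using continuousAt_polarRescale_zero f
    exact ((contDiff_ofCorner (n := 0)).continuous.continuousAt.comp
      (hcorner.comp (contDiff_toCorner (n := 0)).continuous.continuousAt)).continuousWithinAt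
  · exact (contDiffWithinAt_straighten (contDiff_zero.2 hf) hp hp₀).continuousWithinAt

theorem mapsTo_orderIso {e : ℝ ≃o ℝ} (h₀ : e 0 = 0) (hπ : e (π / 2) = π) :
    MapsTo e (Icc 0 (π / 2)) (Icc 0 π) := by
  simpa only [h₀, hπ] using e.monotone.mapsTo_Icc (a := 0) (b := π / 2)

theorem mapsTo_orderIso_symm {e : ℝ ≃o ℝ} (h₀ : e 0 = 0) (hπ : e (π / 2) = π) :
    MapsTo e.symm (Icc 0 π) (Icc 0 (π / 2)) := by
  simpa only [e.symm_apply_eq.2 h₀.symm, e.symm_apply_eq.2 hπ.symm] using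
    e.symm.monotone.mapsTo_Icc (a := 0) (b := π)

theorem invOn_straighten (e : ℝ ≃o ℝ) (h₀ : e 0 = 0) (hπ : e (π / 2) = π) :
    InvOn (straighten e.symm) (straighten e) sector upperHalfPlane := by
  refine ⟨fun p hp => ?_, fun q hq => ?_⟩
  · have h := mapsTo_orderIso h₀ hπ (arg_toCorner_mem_of_mem_sector hp)
    exact straighten_straighten ⟨by linarith [h.1, pi_pos], h.2⟩ (e.symm_apply_apply _)
  · have h := mapsTo_orderIso_symm h₀ hπ (arg_toCorner_mem_of_mem_upperHalfPlane hq)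
    exact straighten_straighten ⟨by linarith [h.1, pi_pos], by linarith [h.2, pi_pos]⟩
      (e.apply_symm_apply _)

theorem bijOn_straighten (e : ℝ ≃o ℝ) (h₀ : e 0 = 0) (hπ : e (π / 2) = π) :
    BijOn (straighten e) sector upperHalfPlane :=
  (invOn_straighten e h₀ hπ).bijOn (mapsTo_straighten_sector (mapsTo_orderIso h₀ hπ))
    (mapsTo_straighten_upperHalfPlane (mapsTo_orderIso_symm h₀ hπ))

theorem straighten_angleExt_of_le_tan (hα : Admissible α) (hp : p ∈ sector)
    (h : p.2 ≤ tan (π / 6) * (1 - p.1)) : straighten (angleExt α) p = p := by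
  have harg : arg (toCorner p) ≤ π / 6 :=
    arg_le_of_im_le_tan_mul_re ⟨by positivity, by linarith [pi_pos]⟩ (by simpa using hp.1) h
  rw [straighten_of_eq_add (c := 0) (by rw [angleExt_of_le hα harg, add_zero])]
  simp

theorem straighten_angleExt_of_tan_le (hα : Admissible α) (hp : p ∈ sector)
    (h : tan (π / 3) * (1 - p.1) ≤ p.2) : straighten (angleExt α) p = (1 + p.2, 1 - p.1) := by
  rcases eq_or_ne p (1, 0) with rfl | hp₀
  · simp [straighten, ofCorner]
  have harg : π / 3 ≤ arg (toCorner p) :=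
    le_arg_of_tan_mul_re_le_im ⟨by positivity, by linarith [pi_pos]⟩ (by simpa using hp₀)
      (by simpa using hp.1) h
  rw [straighten_of_eq_add (angleExt_of_ge hα harg), Complex.ofReal_div, Complex.ofReal_ofNat,
    Complex.exp_pi_div_two_mul_I]
  simp [ofCorner]

end CornerStraightening

open CornerStraightening in
/-- The local model for straightening the corner: for any admissible `α` there
is a map `F` preserving the radial coordinate about `(1, 0)` and rescaling the
angle by `α`, which is a homeomorphism from the closed sector onto the closed
upper half-plane, a diffeomorphism away from `(1, 0)` (in the sense of
`ContDiffOn`), agrees with the identity on the subsector of angles `≤ π/6`, and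
agrees with the clockwise rotation by `π/2` about `(1, 0)` on the subsector of
angles `≥ π/3`. -/
theorem exists_local_corner_straightening_model (α : ℝ → ℝ) (hα : Admissible α) :
    ∃ F : ℝ × ℝ → ℝ × ℝ,
      (∀ r θ : ℝ, 0 ≤ r → θ ∈ Icc 0 (π / 2) →
        F (1 - r * cos θ, r * sin θ) = (1 - r * cos (α θ), r * sin (α θ))) ∧
      BijOn F sector upperHalfPlane ∧
      ContinuousOn F sector ∧
      (∃ G : ℝ × ℝ → ℝ × ℝ,
        InvOn G F sector upperHalfPlane ∧
        ContinuousOn G upperHalfPlane ∧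
        ContDiffOn ℝ (⊤ : ℕ∞) G (upperHalfPlane \ {((1 : ℝ), (0 : ℝ))})) ∧
      ContDiffOn ℝ (⊤ : ℕ∞) F (sector \ {((1 : ℝ), (0 : ℝ))}) ∧
      (∀ p ∈ sector, p.2 ≤ Real.tan (π / 6) * (1 - p.1) → F p = p) ∧
      (∀ p ∈ sector, Real.tan (π / 3) * (1 - p.1) ≤ p.2 →
        F p = (1 + p.2, 1 - p.1)) := by
  set e := angleExtIso hα
  have h₀ : e 0 = 0 := angleExt_of_le hα (by positivity)
  have hπ : e (π / 2) = π := by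
    rw [coe_angleExtIso, angleExt_of_ge hα (by linarith [pi_pos])]
    ring
  refine ⟨straighten e, fun r θ hr hθ => ?_, bijOn_straighten e h₀ hπ,
    (continuousOn_straighten e.continuous).mono sector_subset_upperHalfPlane,
    ⟨straighten e.symm, invOn_straighten e h₀ hπ, continuousOn_straighten e.symm.continuous,
      fun q hq => (contDiffWithinAt_straighten (contDiff_angleExtIso_symm hα) hq.1 hq.2).mono
        sdiff_subset⟩,
    fun p hp => (contDiffWithinAt_straighten (contDiff_angleExt hα)
      (sector_subset_upperHalfPlane hp.1) hp.2).mono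
        (sdiff_subset.trans sector_subset_upperHalfPlane),
    fun _ => straighten_angleExt_of_le_tan hα, fun _ => straighten_angleExt_of_tan_le hα⟩
  rw [straighten_polar e hr ⟨by linarith [hθ.1, pi_pos], by linarith [hθ.2, pi_pos]⟩,
    coe_angleExtIso, angleExt_of_mem_Icc hα hθ]
end

section
/- Let Φ and Φ' be two corner-straightening maps (each satisfying conditions (a)–(e), possibly with different admissible functions α, α' and different data U, V, δ). Define H : Q → Q on Q := [0,∞) × [0,∞) by H(Φ(p)) = Φ'(p) for p ∈ Q₁ := [0,1] × [0,∞); that is, H = Φ' ∘ Φ⁻¹. Then: (i) H is a bijection from Q onto Q, continuous with continuous inverse; (ii) H and its inverse are C^∞ on Q ∖ {(1,0)} (in the sense of ContDiffOn); (iii) H fixes the boundary of Q pointwise, i.e., H(p) = p for every p ∈ ({0} × [0,∞)) ∪ ([0,∞) × {0}); (iv) there exist ε > 0 and a C^∞ function β : ℝ → ℝ with deriv β φ > 0 for all φ ∈ [0, π], β(φ) = φ for all φ ∈ [0, π/6] ∪ [5π/6, π], such that H(1 − r·cos φ, r·sin φ) = (1 − r·cos(β(φ)), r·sin(β(φ)))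 for all r ∈ [0, ε] and φ ∈ [0, π]. -/
open Real Set

/-- The strip `Q₁ = [0,1] × [0,∞)`. -/
def strip : Set (ℝ × ℝ) := Icc (0 : ℝ) 1 ×ˢ Ici (0 : ℝ)

/-- The quadrant `Q = [0,∞) × [0,∞)`. -/
def quadrant : Set (ℝ × ℝ) := Ici (0 : ℝ) ×ˢ Ici (0 : ℝ)

/-- A *corner-straightening map*: a map `Φ` restricting to a homeomorphism from
`Q₁ = [0,1] × ℝ₊` onto `Q = ℝ₊ × ℝ₊`, a diffeomorphism away from `(1, 0)` (in
the sense of `ContDiffOn`), equal to the identity on a relatively open subset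
of `Q₁` containing `({0} × [0,∞)) ∪ ([0,1) × {0})`, equal to the clockwise
rotation by `π/2` about `(1, 0)` on a relatively open subset of `Q₁` containing
`{1} × (0,∞)`, and which near `(1, 0)` preserves the radial coordinate and
rescales the angle by an admissible `α`. -/
def CornerStraightening (Φ : ℝ × ℝ → ℝ × ℝ) : Prop :=
  ∃ (Ψ : ℝ × ℝ → ℝ × ℝ) (α : ℝ → ℝ), Admissible α ∧
    BijOn Φ strip quadrant ∧
    ContinuousOn Φ strip ∧
    InvOn Ψ Φ strip quadrant ∧
    ContinuousOn Ψ quadrant ∧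
    ContDiffOn ℝ (⊤ : ℕ∞) Φ (strip \ {((1 : ℝ), (0 : ℝ))}) ∧
    ContDiffOn ℝ (⊤ : ℕ∞) Ψ (quadrant \ {((1 : ℝ), (0 : ℝ))}) ∧
    (∃ U : Set (ℝ × ℝ), IsOpen U ∧
      ({(0 : ℝ)} ×ˢ Ici (0 : ℝ)) ∪ (Ico (0 : ℝ) 1 ×ˢ {(0 : ℝ)}) ⊆ U ∧
      ∀ p ∈ U ∩ strip, Φ p = p) ∧
    (∃ V : Set (ℝ × ℝ), IsOpen V ∧
      ({(1 : ℝ)} ×ˢ Ioi (0 : ℝ)) ⊆ V ∧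
      ∀ p ∈ V ∩ strip, Φ p = (1 + p.2, 1 - p.1)) ∧
    (∃ δ : ℝ, 0 < δ ∧ ∀ r ∈ Icc (0 : ℝ) δ, ∀ θ ∈ Icc (0 : ℝ) (π / 2),
      Φ (1 - r * cos θ, r * sin θ) = (1 - r * cos (α θ), r * sin (α θ)))

open Filter Topology

/-!
Off the corner `(1, 0)`, `H = Φ' ∘ Φ⁻¹` is a composite of homeomorphisms which fix the corner
and are smooth away from it. On `∂Q` the maps `Φ` and `Φ'` have the same preimage of each point:
the point itself on the vertical edge and on `[0,1] × {0}`, and `(1, x - 1)` for `(x, 0)` with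
`x > 1`, by the quarter-turn condition. Near the corner, in polar coordinates, `H` rescales the
angle by `β = α' ∘ α⁻¹`. Extending `α` by `t` below `π/6` and by `t + π/2` above `π/3` makes it a
diffeomorphism of `ℝ`, so that `β` is a smooth function on `ℝ` with positive derivative on `[0, π]`.
-/

namespace Admissible

variable {α α' : ℝ → ℝ}

noncomputable def extend (α : ℝ → ℝ) (t : ℝ) : ℝ :=
  if t < π / 6 then t else if π / 3 < t then t + π / 2 else α t

theorem extend_eqOn_Icc (hα : Admissible α) : EqOn (extend α) α (Icc 0 (π / 2)) := by
  intro t ht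
  unfold extend
  split_ifs with hlo hhi
  · exact (hα.2.2.1 t ⟨ht.1, hlo.le⟩).symm
  · exact (hα.2.2.2 t ⟨hhi.le, ht.2⟩).symm
  · rfl

theorem exists_eventuallyEq_extend (hα : Admissible α) (t : ℝ) :
    ∃ f : ℝ → ℝ, extend α =ᶠ[𝓝 t] f ∧ ContDiff ℝ (⊤ : ℕ∞) f ∧ 0 < deriv f t := by
  have hπ := pi_pos
  rcases lt_or_ge t (π / 6) with hlo | hlo
  · refine ⟨id, ?_, contDiff_id, by simp⟩
    filter_upwards [Iio_mem_nhds hlo] with s hs using if_pos hs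
  rcases lt_or_ge (π / 3) t with hhi | hhi
  · refine ⟨(· + π / 2), ?_, contDiff_id.add contDiff_const, by simp⟩
    filter_upwards [Ioi_mem_nhds hhi] with s (hs : π / 3 < s)
    rw [extend, if_neg (by linarith), if_pos hs]
  · have ht : t ∈ Ioo 0 (π / 2) := ⟨by linarith, by linarith⟩
    refine ⟨α, ?_, hα.1, hα.2.1 t (Ioo_subset_Icc_self ht)⟩
    filter_upwards [Ioo_mem_nhds ht.1 ht.2] with s hs
    exact hα.extend_eqOn_Icc (Ioo_subset_Icc_self hs)

theorem contDiff_extend (hα : Admissible α) : ContDiff ℝ (⊤ : ℕ∞) (extend α) :=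
  contDiff_iff_contDiffAt.2 fun t => by
    obtain ⟨f, hf, hfs, -⟩ := hα.exists_eventuallyEq_extend t
    exact hfs.contDiffAt.congr_of_eventuallyEq hf

theorem deriv_extend_pos (hα : Admissible α) (t : ℝ) : 0 < deriv (extend α) t := by
  obtain ⟨f, hf, -, hf'⟩ := hα.exists_eventuallyEq_extend t
  rwa [hf.deriv_eq]

theorem hasDerivAt_extend (hα : Admissible α) (t : ℝ) :
    HasDerivAt (extend α) (deriv (extend α) t) t :=
  (hα.contDiff_extend.differentiable (by simp) t).hasDerivAt

theorem strictMono_extend (hα : Admissible α) : StrictMono (extend α) :=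
  strictMono_of_deriv_pos hα.deriv_extend_pos

theorem surjective_extend (hα : Admissible α) : Function.Surjective (extend α) := by
  refine hα.contDiff_extend.continuous.surjective ?_ ?_
  · refine (tendsto_atTop_add_const_right _ (π / 2) tendsto_id).congr' ?_
    filter_upwards [eventually_gt_atTop (π / 3)] with t ht
    rw [extend, if_neg (by linarith [pi_pos]), if_pos ht, id]
  · refine tendsto_id.congr' ?_
    filter_upwards [eventually_lt_atBot (π / 6)] with t ht
    exact (if_pos ht).symm

noncomputable def extendHomeomorph (hα : Admissible α) : ℝ ≃ₜ ℝ :=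
  (hα.strictMono_extend.orderIsoOfSurjective _ hα.surjective_extend).toHomeomorph

theorem coe_extendHomeomorph (hα : Admissible α) : ⇑hα.extendHomeomorph = extend α :=
  rfl

theorem contDiff_extendHomeomorph_symm (hα : Admissible α) :
    ContDiff ℝ (⊤ : ℕ∞) hα.extendHomeomorph.symm :=
  hα.extendHomeomorph.contDiff_symm_deriv (fun t => (hα.deriv_extend_pos t).ne')
    hα.hasDerivAt_extend hα.contDiff_extend

theorem hasDerivAt_extendHomeomorph_symm (hα : Admissible α) (φ : ℝ) :
    HasDerivAt hα.extendHomeomorph.symm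
      (deriv (extend α) (hα.extendHomeomorph.symm φ))⁻¹ φ :=
  .of_local_left_inverse hα.extendHomeomorph.symm.continuous.continuousAt
    (hα.hasDerivAt_extend _) (hα.deriv_extend_pos _).ne'
    (.of_forall hα.extendHomeomorph.apply_symm_apply)

theorem extendHomeomorph_symm_mapsTo (hα : Admissible α) :
    MapsTo hα.extendHomeomorph.symm (Icc 0 π) (Icc 0 (π / 2)) := by
  have hπ := pi_pos
  have h0 : extend α 0 = 0 := if_pos (by positivity)
  have hπ2 : extend α (π / 2) = π := by
    rw [hα.extend_eqOn_Icc ⟨by positivity, le_rfl⟩, hα.2.2.2 _ ⟨by linarith, le_rfl⟩]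
    ring
  intro φ hφ
  have hφe : extend α (hα.extendHomeomorph.symm φ) = φ := hα.extendHomeomorph.apply_symm_apply φ
  constructor
  · rw [← hα.strictMono_extend.le_iff_le, h0, hφe]
    exact hφ.1
  · rw [← hα.strictMono_extend.le_iff_le, hπ2, hφe]
    exact hφ.2

theorem exists_comparison (hα : Admissible α) (hα' : Admissible α') :
    ∃ β : ℝ → ℝ, ContDiff ℝ (⊤ : ℕ∞) β ∧ (∀ φ ∈ Icc 0 π, 0 < deriv β φ) ∧
      (∀ φ ∈ Icc 0 (π / 6) ∪ Icc (5 * π / 6) π, β φ = φ) ∧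
      ∀ φ ∈ Icc 0 π, ∃ θ ∈ Icc 0 (π / 2), α θ = φ ∧ α' θ = β φ := by
  have hπ := pi_pos
  have he {θ φ : ℝ} (hθ : θ ∈ Icc 0 (π / 2)) (hθφ : α θ = φ) :
      hα.extendHomeomorph.symm φ = θ := by
    rw [Homeomorph.symm_apply_eq, hα.coe_extendHomeomorph, hα.extend_eqOn_Icc hθ, hθφ]
  refine ⟨α' ∘ hα.extendHomeomorph.symm, hα'.1.comp hα.contDiff_extendHomeomorph_symm,
    fun φ hφ => ?_, ?_, fun φ hφ => ⟨_, hα.extendHomeomorph_symm_mapsTo hφ, ?_, rfl⟩⟩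
  · have hα'd : HasDerivAt α' (deriv α' (hα.extendHomeomorph.symm φ))
        (hα.extendHomeomorph.symm φ) :=
      (hα'.1.differentiable (by simp) _).hasDerivAt
    rw [(hα'd.comp φ (hα.hasDerivAt_extendHomeomorph_symm φ)).deriv]
    exact mul_pos (hα'.2.1 _ (hα.extendHomeomorph_symm_mapsTo hφ))
      (inv_pos.2 (hα.deriv_extend_pos _))
  · rintro φ (hφ | ⟨hφ₁, hφ₂⟩)
    · have hφ' : φ ∈ Icc 0 (π / 2) := ⟨hφ.1, by linarith [hφ.2]⟩
      rw [Function.comp_apply, he hφ' (hα.2.2.1 φ hφ), hα'.2.2.1 φ hφ]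
    · have hφ' : φ - π / 2 ∈ Icc (π / 3) (π / 2) := ⟨by linarith, by linarith⟩
      have hφ'' : φ - π / 2 ∈ Icc 0 (π / 2) := ⟨by linarith, hφ'.2⟩
      rw [Function.comp_apply, he hφ'' ((hα.2.2.2 _ hφ').trans (by ring)), hα'.2.2.2 _ hφ']
      ring
  · rw [← hα.extend_eqOn_Icc (hα.extendHomeomorph_symm_mapsTo hφ), ← hα.coe_extendHomeomorph,
      Homeomorph.apply_symm_apply]

end Admissible

section PuncturedDiffeomorph

variable (𝕜 : Type*) [NontriviallyNormedField 𝕜] {E F G : Type*}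
  [NormedAddCommGroup E] [NormedSpace 𝕜 E] [NormedAddCommGroup F] [NormedSpace 𝕜 F]
  [NormedAddCommGroup G] [NormedSpace 𝕜 G]

structure IsPuncturedDiffeoOn (n : WithTop ℕ∞) (f : E → F) (g : F → E) (s : Set E) (t : Set F)
    (a : E) (b : F) : Prop where
  mem : a ∈ s
  apply_eq : f a = b
  mapsTo : MapsTo f s t
  mapsTo_symm : MapsTo g t s
  invOn : InvOn g f s t
  continuousOn : ContinuousOn f s
  continuousOn_symm : ContinuousOn g t
  contDiffOn : ContDiffOn 𝕜 n f (s \ {a})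
  contDiffOn_symm : ContDiffOn 𝕜 n g (t \ {b})

namespace IsPuncturedDiffeoOn

variable {𝕜} {n : WithTop ℕ∞} {f f' : E → F} {g : F → E} {f₂ : F → G} {g₂ : G → F}
  {k : E → G} {l : G → E}
  {s : Set E} {t : Set F} {u : Set G} {a : E} {b : F} {c : G}

theorem symm (h : IsPuncturedDiffeoOn 𝕜 n f g s t a b) : IsPuncturedDiffeoOn 𝕜 n g f t s b a where
  mem := h.apply_eq ▸ h.mapsTo h.mem
  apply_eq := h.apply_eq ▸ h.invOn.1 h.mem
  mapsTo := h.mapsTo_symm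
  mapsTo_symm := h.mapsTo
  invOn := h.invOn.symm
  continuousOn := h.continuousOn_symm
  continuousOn_symm := h.continuousOn
  contDiffOn := h.contDiffOn_symm
  contDiffOn_symm := h.contDiffOn

theorem bijOn (h : IsPuncturedDiffeoOn 𝕜 n f g s t a b) : BijOn f s t :=
  h.invOn.bijOn h.mapsTo h.mapsTo_symm

theorem mapsTo_diff (h : IsPuncturedDiffeoOn 𝕜 n f g s t a b) : MapsTo f (s \ {a}) (t \ {b}) :=
  fun x ⟨hx, hxa⟩ => ⟨h.mapsTo hx, fun hxb =>
    hxa (h.bijOn.injOn hx h.mem ((hxb : f x = b).trans h.apply_eq.symm))⟩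

theorem comp (h₂ : IsPuncturedDiffeoOn 𝕜 n f₂ g₂ t u b c)
    (h : IsPuncturedDiffeoOn 𝕜 n f g s t a b) :
    IsPuncturedDiffeoOn 𝕜 n (f₂ ∘ f) (g ∘ g₂) s u a c where
  mem := h.mem
  apply_eq := by rw [Function.comp_apply, h.apply_eq, h₂.apply_eq]
  mapsTo := h₂.mapsTo.comp h.mapsTo
  mapsTo_symm := h.mapsTo_symm.comp h₂.mapsTo_symm
  invOn := h.invOn.comp h₂.invOn h.mapsTo h₂.mapsTo_symm
  continuousOn := h₂.continuousOn.comp h.continuousOn h.mapsTo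
  continuousOn_symm := h.continuousOn_symm.comp h₂.continuousOn_symm h₂.mapsTo_symm
  contDiffOn := h₂.contDiffOn.comp h.contDiffOn h.mapsTo_diff
  contDiffOn_symm := h.contDiffOn_symm.comp h₂.contDiffOn_symm h₂.symm.mapsTo_diff

theorem congr (h : IsPuncturedDiffeoOn 𝕜 n f g s t a b) (hff' : EqOn f f' s) :
    IsPuncturedDiffeoOn 𝕜 n f' g s t a b where
  mem := h.mem
  apply_eq := (hff' h.mem).symm.trans h.apply_eq
  mapsTo := fun x hx => hff' hx ▸ h.mapsTo hx
  mapsTo_symm := h.mapsTo_symm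
  invOn := ⟨fun x hx => by rw [← hff' hx, h.invOn.1 hx],
    fun y hy => by rw [← hff' (h.mapsTo_symm hy), h.invOn.2 hy]⟩
  continuousOn := h.continuousOn.congr hff'.symm
  continuousOn_symm := h.continuousOn_symm
  contDiffOn := h.contDiffOn.congr fun x hx => (hff' hx.1).symm
  contDiffOn_symm := h.contDiffOn_symm

theorem of_apply_eq (h : IsPuncturedDiffeoOn 𝕜 n f g s t a b)
    (h' : IsPuncturedDiffeoOn 𝕜 n k l s u a c) {H : F → G}
    (hH : ∀ x ∈ s, H (f x) = k x) : IsPuncturedDiffeoOn 𝕜 n H (f ∘ l) t u b c :=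
  (h'.comp h.symm).congr fun y hy => by
    rw [Function.comp_apply, ← hH _ (h.mapsTo_symm hy), h.invOn.2 hy]

end IsPuncturedDiffeoOn

end PuncturedDiffeomorph

theorem polar_mem_strip {r θ : ℝ} (hr : r ∈ Icc 0 1) (hθ : θ ∈ Icc 0 (π / 2)) :
    (1 - r * cos θ, r * sin θ) ∈ strip := by
  have hcos : 0 ≤ cos θ := cos_nonneg_of_mem_Icc ⟨by linarith [hθ.1, pi_pos], hθ.2⟩
  have hsin : 0 ≤ sin θ := sin_nonneg_of_nonneg_of_le_pi hθ.1 (by linarith [hθ.2, pi_pos])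
  refine ⟨⟨?_, ?_⟩, mul_nonneg hr.1 hsin⟩
  · nlinarith [cos_le_one θ, hr.2]
  · nlinarith [hr.1]

noncomputable def boundaryLift (p : ℝ × ℝ) : ℝ × ℝ :=
  if p.1 ≤ 1 then p else (1, p.1 - 1)

theorem boundaryLift_mem_strip {p : ℝ × ℝ}
    (hp : p ∈ ({(0 : ℝ)} ×ˢ Ici (0 : ℝ)) ∪ (Ici (0 : ℝ) ×ˢ {(0 : ℝ)})) :
    boundaryLift p ∈ strip := by
  obtain ⟨x, y⟩ := p
  rcases hp with ⟨rfl, hy⟩ | ⟨hx, rfl⟩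
  · rw [boundaryLift, if_pos zero_le_one]
    exact ⟨⟨le_rfl, zero_le_one⟩, hy⟩
  rw [boundaryLift]
  split_ifs with hx1
  · exact ⟨⟨hx, hx1⟩, self_mem_Ici⟩
  · exact ⟨⟨zero_le_one, le_rfl⟩, sub_nonneg.2 (not_le.1 hx1).le⟩

namespace CornerStraightening

variable {Φ : ℝ × ℝ → ℝ × ℝ}

theorem exists_polar (hΦ : CornerStraightening Φ) :
    ∃ α, Admissible α ∧ ∃ δ > 0, ∀ r ∈ Icc (0 : ℝ) δ, ∀ θ ∈ Icc (0 : ℝ) (π / 2),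
      Φ (1 - r * cos θ, r * sin θ) = (1 - r * cos (α θ), r * sin (α θ)) := by
  obtain ⟨-, α, hα, -, -, -, -, -, -, -, -, hpolar⟩ := hΦ
  exact ⟨α, hα, hpolar⟩

theorem apply_corner (hΦ : CornerStraightening Φ) : Φ (1, 0) = (1, 0) := by
  obtain ⟨α, hα, δ, hδ, hpolar⟩ := hΦ.exists_polar
  simpa [hα.2.2.1 0 ⟨le_rfl, by positivity⟩] using
    hpolar 0 ⟨le_rfl, hδ.le⟩ 0 ⟨le_rfl, by positivity⟩

theorem exists_isPuncturedDiffeoOn (hΦ : CornerStraightening Φ) :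
    ∃ Ψ, IsPuncturedDiffeoOn ℝ (⊤ : ℕ∞) Φ Ψ strip quadrant (1, 0) (1, 0) := by
  have hcorner := hΦ.apply_corner
  obtain ⟨Ψ, -, -, hbij, hΦc, hinv, hΨc, hΦs, hΨs, -⟩ := hΦ
  exact ⟨Ψ, ⟨⟨zero_le_one, le_rfl⟩, self_mem_Ici⟩, hcorner, hbij.mapsTo,
    (hbij.symm hinv.symm).mapsTo, hinv, hΦc, hΨc, hΦs, hΨs⟩

theorem apply_boundaryLift (hΦ : CornerStraightening Φ) {p : ℝ × ℝ}
    (hp : p ∈ ({(0 : ℝ)} ×ˢ Ici (0 : ℝ)) ∪ (Ici (0 : ℝ) ×ˢ {(0 : ℝ)})) :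
    Φ (boundaryLift p) = p := by
  have hlift := boundaryLift_mem_strip hp
  have hcorner := hΦ.apply_corner
  obtain ⟨-, -, -, -, -, -, -, -, -, ⟨U, -, hU, hΦU⟩, ⟨V, -, hV, hΦV⟩, -⟩ := hΦ
  obtain ⟨x, y⟩ := p
  rcases hp with ⟨rfl, hy⟩ | ⟨hx, rfl⟩
  · rw [boundaryLift, if_pos zero_le_one] at hlift ⊢
    exact hΦU _ ⟨hU (Or.inl ⟨rfl, hy⟩), hlift⟩
  rcases lt_trichotomy x 1 with hx1 | rfl | hx1
  · rw [boundaryLift, if_pos hx1.le] at hlift ⊢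
    exact hΦU _ ⟨hU (Or.inr ⟨⟨hx, hx1⟩, rfl⟩), hlift⟩
  · rw [boundaryLift, if_pos le_rfl]
    exact hcorner
  · rw [boundaryLift, if_neg hx1.not_ge] at hlift ⊢
    rw [hΦV _ ⟨hV ⟨mem_singleton (1 : ℝ), mem_Ioi.2 (sub_pos.2 hx1)⟩, hlift⟩]
    ext <;> simp

end CornerStraightening

/-- Comparison of two corner-straightening maps `Φ`, `Φ'`: the map `H = Φ' ∘ Φ⁻¹`
(characterized by `H (Φ p) = Φ' p` for `p ∈ Q₁`) is a homeomorphism of the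
quadrant `Q`, a diffeomorphism away from `(1, 0)` (in the sense of
`ContDiffOn`), fixes the boundary of `Q` pointwise, and near `(1, 0)` preserves
the radial coordinate and rescales the angle by a self-diffeomorphism `β` of
`[0, π]` which is the identity on `[0, π/6]` and on `[5π/6, π]`. -/
theorem corner_straightening_comparison
    (Φ Φ' : ℝ × ℝ → ℝ × ℝ)
    (hΦ : CornerStraightening Φ) (hΦ' : CornerStraightening Φ')
    (H : ℝ × ℝ → ℝ × ℝ) (hH : ∀ p ∈ strip, H (Φ p) = Φ' p) :
    BijOn H quadrant quadrant ∧
    ContinuousOn H quadrant ∧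
    (∃ K : ℝ × ℝ → ℝ × ℝ,
      InvOn K H quadrant quadrant ∧
      ContinuousOn K quadrant ∧
      ContDiffOn ℝ (⊤ : ℕ∞) K (quadrant \ {((1 : ℝ), (0 : ℝ))})) ∧
    ContDiffOn ℝ (⊤ : ℕ∞) H (quadrant \ {((1 : ℝ), (0 : ℝ))}) ∧
    (∀ p ∈ ({(0 : ℝ)} ×ˢ Ici (0 : ℝ)) ∪ (Ici (0 : ℝ) ×ˢ {(0 : ℝ)}), H p = p) ∧
    (∃ ε : ℝ, 0 < ε ∧ ∃ β : ℝ → ℝ, ContDiff ℝ (⊤ : ℕ∞) β ∧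
      (∀ φ ∈ Icc (0 : ℝ) π, 0 < deriv β φ) ∧
      (∀ φ ∈ Icc (0 : ℝ) (π / 6) ∪ Icc (5 * π / 6) π, β φ = φ) ∧
      ∀ r ∈ Icc (0 : ℝ) ε, ∀ φ ∈ Icc (0 : ℝ) π,
        H (1 - r * cos φ, r * sin φ) = (1 - r * cos (β φ), r * sin (β φ))) := by
  obtain ⟨Ψ, hΦΨ⟩ := hΦ.exists_isPuncturedDiffeoOn
  obtain ⟨Ψ', hΦΨ'⟩ := hΦ'.exists_isPuncturedDiffeoOn
  have hHK := hΦΨ.of_apply_eq hΦΨ' hH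
  refine ⟨hHK.bijOn, hHK.continuousOn, ⟨_, hHK.invOn, hHK.continuousOn_symm,
    hHK.contDiffOn_symm⟩, hHK.contDiffOn, fun p hp => ?_, ?_⟩
  · calc H p = H (Φ (boundaryLift p)) := by rw [hΦ.apply_boundaryLift hp]
      _ = Φ' (boundaryLift p) := hH _ (boundaryLift_mem_strip hp)
      _ = p := hΦ'.apply_boundaryLift hp
  obtain ⟨α, hα, δ, hδ, hΦα⟩ := hΦ.exists_polar
  obtain ⟨α', hα', δ', hδ', hΦα'⟩ := hΦ'.exists_polar
  obtain ⟨β, hβ, hβ', hβid, hβα⟩ := hα.exists_comparison hα'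
  refine ⟨min 1 (min δ δ'), by positivity, β, hβ, hβ', hβid, fun r hr φ hφ => ?_⟩
  obtain ⟨θ, hθ, rfl, hθβ⟩ := hβα φ hφ
  have hr₁ : r ≤ 1 := hr.2.trans (min_le_left _ _)
  have hrδ : r ≤ δ := hr.2.trans ((min_le_right _ _).trans (min_le_left _ _))
  have hrδ' : r ≤ δ' := hr.2.trans ((min_le_right _ _).trans (min_le_right _ _))
  rw [← hΦα r ⟨hr.1, hrδ⟩ θ hθ, hH _ (polar_mem_strip ⟨hr.1, hr₁⟩ hθ),
    hΦα' r ⟨hr.1, hrδ'⟩ θ hθ, hθβ]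
end
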